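/- Let r ∈ ℕ with r ≥ 1, b := 1/(2r), n := r + 1, positions x_j := (j−1)/(n−1) for j = 1,…,n. Let c : [0,1] → [0,1] be differentiable, strictly increasing and concave with c(0) = 0 and c(1) = 1, write c_j := c(x_j), and fix λ ≥ 0. Define masses m_j := e^{−λ c_j}/z with z := Σ_{l=1}^{n} e^{−λ c_l}, let μ := Σ_{j=1}^{n} m_j·δ_{x_j}, and set I := −Σ_j m_j log m_j and c̄ := Σ_j m_j c_j. Then the marginal information density i(x; μ) := −r·∫_{x−b}^{x+b} log(2b·p_Y(y; μ)) dy, with p_Y(y; μ) := r·μ([y−b, y+b] ∩ [0,1]), satisfies: (i) i(x_j; μ) = I + λ(c_j − c̄) for every j ∈ {1,…,n}, and (ii) i(x; μ) ≤ I + λ(c(x) − c̄) for every x ∈ [0,1]. (These are Smith's necessary and sufficient conditions, so μ is the capacity-achieving input distribution of the channel under peak amplitude constraint [0,1] and cost constraint E[c(X)] ≤ c̄.) -/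

import Mathlib

open MeasureTheory Set

noncomputable def outDen (r b : ℝ) (μ : Measure ℝ) (y : ℝ) : ℝ :=
  r * (μ (Icc (y - b) (y + b) ∩ Icc 0 1)).toReal

noncomputable def margInfo (r b : ℝ) (μ : Measure ℝ) (x : ℝ) : ℝ :=
  -r * ∫ y in (x - b)..(x + b), Real.log (2 * b * outDen r b μ y)

theorem stmt7 (r : ℕ) (hr : 1 ≤ r) (b : ℝ) (hb : b = 1 / (2 * (r : ℝ)))
    (n : ℕ) (hn : n = r + 1)
    (x : ℕ → ℝ) (hx : ∀ j, x j = ((j : ℝ) - 1) / ((n : ℝ) - 1))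
    (c : ℝ → ℝ)
    (hc_diff : DifferentiableOn ℝ c (Icc 0 1))
    (hc_mono : StrictMonoOn c (Icc 0 1))
    (hc_conc : ConcaveOn ℝ (Icc 0 1) c)
    (hc_maps : MapsTo c (Icc 0 1) (Icc 0 1))
    (hc0 : c 0 = 0) (hc1 : c 1 = 1)
    (lam : ℝ) (hlam : 0 ≤ lam)
    (z : ℝ) (hz : z = ∑ l ∈ Finset.Icc 1 n, Real.exp (-lam * c (x l)))
    (m : ℕ → ℝ) (hm : ∀ j, m j = Real.exp (-lam * c (x j)) / z)
    (μ : Measure ℝ)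
    (hμ : μ = ∑ j ∈ Finset.Icc 1 n, ENNReal.ofReal (m j) • Measure.dirac (x j))
    (I cb : ℝ)
    (hI : I = -∑ j ∈ Finset.Icc 1 n, m j * Real.log (m j))
    (hcb : cb = ∑ j ∈ Finset.Icc 1 n, m j * c (x j)) :
    (∀ j ∈ Finset.Icc 1 n,
      margInfo (r : ℝ) b μ (x j) = I + lam * (c (x j) - cb)) ∧
    (∀ w ∈ Icc (0:ℝ) 1, margInfo (r : ℝ) b μ w ≤ I + lam * (c w - cb)) := by
  have hR1 : (1:ℝ) ≤ (r:ℝ) := by exact_mod_cast hr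
  have hR0 : (0:ℝ) < (r:ℝ) := by linarith
  have hbpos : 0 < b := by rw [hb]; positivity
  have h2br : 2 * b * (r:ℝ) = 1 := by rw [hb]; field_simp
  have hx' : ∀ j : ℕ, x j = ((j:ℝ) - 1) / (r:ℝ) := by
    intro j; rw [hx j, hn]; norm_num
  have hzpos : 0 < z := by
    rw [hz]
    apply Finset.sum_pos (fun l _ => Real.exp_pos _)
    exact ⟨1, by rw [Finset.mem_Icc]; omega⟩
  have hmpos : ∀ j, 0 < m j := fun j => by
    rw [hm j]; positivity
  have hlogm : ∀ j, Real.log (m j) = -lam * c (x j) - Real.log z := by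
    intro j
    rw [hm j, Real.log_div (Real.exp_ne_zero _) (ne_of_gt hzpos), Real.log_exp]
  have hsum : ∑ j ∈ Finset.Icc 1 n, m j = 1 := by
    have h1 : ∑ j ∈ Finset.Icc 1 n, m j
        = (∑ j ∈ Finset.Icc 1 n, Real.exp (-lam * c (x j))) / z := by
      rw [Finset.sum_div]; exact Finset.sum_congr rfl (fun j _ => hm j)
    rw [h1, ← hz, div_self (ne_of_gt hzpos)]
  have hI' : I = lam * cb + Real.log z := by
    rw [hI, hcb]
    have h1 : ∑ j ∈ Finset.Icc 1 n, m j * Real.log (m j)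
        = (∑ j ∈ Finset.Icc 1 n, -(lam * (m j * c (x j))))
          - (∑ j ∈ Finset.Icc 1 n, m j) * Real.log z := by
      rw [Finset.sum_mul, ← Finset.sum_sub_distrib]
      exact Finset.sum_congr rfl fun j _ => by rw [hlogm j]; ring
    have h2 : ∑ j ∈ Finset.Icc 1 n, -(lam * (m j * c (x j)))
        = -(lam * ∑ j ∈ Finset.Icc 1 n, m j * c (x j)) := by
      rw [Finset.sum_neg_distrib, neg_inj, Finset.mul_sum]
    rw [h1, h2, hsum]; ring
  have hxmem : ∀ j ∈ Finset.Icc 1 n, x j ∈ Icc (0:ℝ) 1 := by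
    intro j hj
    rw [Finset.mem_Icc] at hj
    rw [hx' j]
    have hj1 : (1:ℝ) ≤ (j:ℝ) := by exact_mod_cast hj.1
    have hj2 : (j:ℝ) ≤ (r:ℝ) + 1 := by
      have := hj.2; rw [hn] at this; exact_mod_cast this
    constructor
    · apply div_nonneg _ (le_of_lt hR0); linarith
    · rw [div_le_one hR0]; linarith
  have hSmeas : ∀ y : ℝ, MeasurableSet (Icc (y-b) (y+b) ∩ Icc (0:ℝ) 1) :=
    fun y => (measurableSet_Icc).inter measurableSet_Icc
  have hmeasure : ∀ j ∈ Finset.Icc 1 n, ∀ y : ℝ, x j - b < y → y < x j + b →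
      μ (Icc (y-b) (y+b) ∩ Icc 0 1) = ENNReal.ofReal (m j) := by
    intro j hj y hy1 hy2
    rw [hμ, Measure.finset_sum_apply]
    have key : ∀ l ∈ Finset.Icc 1 n,
        (ENNReal.ofReal (m l) • Measure.dirac (x l)) (Icc (y-b) (y+b) ∩ Icc 0 1)
        = if l = j then ENNReal.ofReal (m j) else 0 := by
      intro l hl
      rw [Measure.smul_apply, Measure.dirac_apply' _ (hSmeas y), smul_eq_mul]
      by_cases hlj : l = j
      · subst hlj
        have hmem : x l ∈ Icc (y-b) (y+b) ∩ Icc 0 1 :=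
          ⟨⟨by linarith, by linarith⟩, hxmem l hl⟩
        simp [hmem]
      · have hd : x l - x j = ((l:ℝ) - (j:ℝ)) / (r:ℝ) := by
          rw [hx' l, hx' j]; ring
        have habs : (1:ℝ) ≤ |(l:ℝ) - (j:ℝ)| := by
          rcases Nat.lt_or_ge l j with h | h
          · have h' : (l:ℝ) + 1 ≤ (j:ℝ) := by exact_mod_cast h
            rw [abs_of_neg (by linarith)]; linarith
          · have hlt : j < l := lt_of_le_of_ne h (Ne.symm hlj)
            have h' : (j:ℝ) + 1 ≤ (l:ℝ) := by exact_mod_cast hlt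
            rw [abs_of_pos (by linarith)]; linarith
        have hfar : 2 * b ≤ |x l - x j| := by
          rw [hd, abs_div, abs_of_pos hR0, le_div_iff₀ hR0, h2br]; exact habs
        have hnmem : x l ∉ Icc (y-b) (y+b) ∩ Icc 0 1 := by
          rintro ⟨⟨h1, h2⟩, -⟩
          have h3 : |x l - x j| < 2 * b := by
            rw [abs_lt]; constructor <;> linarith
          linarith
        simp [hnmem, hlj]
    rw [Finset.sum_congr rfl key, Finset.sum_ite_eq' (Finset.Icc 1 n) j]
    simp [hj]
  have hlog : ∀ j ∈ Finset.Icc 1 n, ∀ y : ℝ, x j - b < y → y < x j + b →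
      Real.log (2 * b * outDen (r:ℝ) b μ y) = Real.log (m j) := by
    intro j hj y hy1 hy2
    rw [outDen, hmeasure j hj y hy1 hy2, ENNReal.toReal_ofReal (le_of_lt (hmpos j))]
    congr 1
    calc 2 * b * ((r:ℝ) * m j) = (2 * b * (r:ℝ)) * m j := by ring
      _ = m j := by rw [h2br]; ring
  have haecongr : ∀ j ∈ Finset.Icc 1 n, ∀ a₁ a₂ : ℝ, x j - b ≤ a₁ → a₁ ≤ a₂ → a₂ ≤ x j + b →
      ∀ᵐ (y:ℝ) ∂volume, y ∈ Set.uIoc a₁ a₂ →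
        Real.log (2 * b * outDen (r:ℝ) b μ y) = Real.log (m j) := by
    intro j hj a₁ a₂ h1 h12 h2
    have hne : ∀ᵐ (y:ℝ) ∂volume, y ≠ x j + b := by
      rw [ae_iff]
      simpa using Real.volume_singleton (a := x j + b)
    filter_upwards [hne] with y hy hymem
    rw [Set.uIoc_of_le h12] at hymem
    exact hlog j hj y (lt_of_le_of_lt h1 hymem.1)
      (lt_of_le_of_ne (le_trans hymem.2 h2) hy)
  have hintg : ∀ j ∈ Finset.Icc 1 n, ∀ a₁ a₂ : ℝ, x j - b ≤ a₁ → a₁ ≤ a₂ → a₂ ≤ x j + b →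
      IntervalIntegrable (fun y => Real.log (2 * b * outDen (r:ℝ) b μ y)) volume a₁ a₂ := by
    intro j hj a₁ a₂ h1 h12 h2
    rw [intervalIntegrable_iff]
    have hae : (fun y => Real.log (2 * b * outDen (r:ℝ) b μ y))
        =ᵐ[volume.restrict (Set.uIoc a₁ a₂)] (fun _ => Real.log (m j)) :=
      (ae_restrict_iff' measurableSet_uIoc).2 (haecongr j hj a₁ a₂ h1 h12 h2)
    exact ((integrableOn_const (C := Real.log (m j))
      (by rw [Set.uIoc_of_le h12]; exact measure_Ioc_lt_top.ne))).congr hae.symm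
  have hint : ∀ j ∈ Finset.Icc 1 n, ∀ a₁ a₂ : ℝ, x j - b ≤ a₁ → a₁ ≤ a₂ → a₂ ≤ x j + b →
      (∫ y in a₁..a₂, Real.log (2 * b * outDen (r:ℝ) b μ y))
        = (a₂ - a₁) * Real.log (m j) := by
    intro j hj a₁ a₂ h1 h12 h2
    rw [intervalIntegral.integral_congr_ae (haecongr j hj a₁ a₂ h1 h12 h2),
      intervalIntegral.integral_const, smul_eq_mul]
  constructor
  · intro j hj
    have e1 : margInfo (r:ℝ) b μ (x j)
        = -(r:ℝ) * ((x j + b - (x j - b)) * Real.log (m j)) := by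
      rw [margInfo, hint j hj (x j - b) (x j + b) le_rfl (by linarith) le_rfl]
    rw [e1, hI', hlogm j]
    linear_combination (lam * c (x j) + Real.log z) * h2br
  · intro w hw
    obtain ⟨hw0, hw1⟩ := hw
    obtain ⟨k, hkr, hkR, hwk1⟩ : ∃ k : ℕ, k ≤ r - 1 ∧ (k:ℝ) ≤ w * (r:ℝ) ∧ w * (r:ℝ) ≤ (k:ℝ) + 1 := by
      have hfl0 : (0:ℤ) ≤ ⌊w * (r:ℝ)⌋ := Int.floor_nonneg.2 (by positivity)
      have hcast : ((⌊w * (r:ℝ)⌋.toNat : ℕ) : ℝ) = ((⌊w * (r:ℝ)⌋ : ℤ) : ℝ) := by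
        exact_mod_cast congrArg (Int.cast : ℤ → ℝ) (Int.toNat_of_nonneg hfl0)
      refine ⟨min (⌊w * (r:ℝ)⌋.toNat) (r - 1), min_le_right _ _, ?_, ?_⟩
      · have h1 : ((min (⌊w * (r:ℝ)⌋.toNat) (r - 1) : ℕ):ℝ)
            ≤ ((⌊w * (r:ℝ)⌋.toNat : ℕ):ℝ) := by
          exact_mod_cast min_le_left _ _
        rw [hcast] at h1
        exact h1.trans (Int.floor_le _)
      · rcases le_or_gt (⌊w * (r:ℝ)⌋.toNat) (r-1) with h | h
        · rw [min_eq_left h, hcast]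
          exact le_of_lt (Int.lt_floor_add_one _)
        · rw [min_eq_right (le_of_lt h)]
          have hkc : ((r - 1 : ℕ):ℝ) = (r:ℝ) - 1 := by
            push_cast [hr]; ring
          rw [hkc]
          nlinarith
    have hj : k + 1 ∈ Finset.Icc 1 n := by
      rw [Finset.mem_Icc, hn]; omega
    have hj1 : k + 2 ∈ Finset.Icc 1 n := by
      rw [Finset.mem_Icc, hn]; omega
    have hxj : x (k+1) = (k:ℝ) / (r:ℝ) := by
      rw [hx' (k+1)]; push_cast; ring_nf
    have hxj1 : x (k+2) = ((k:ℝ) + 1) / (r:ℝ) := by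
      rw [hx' (k+2)]; push_cast; ring_nf
    have hwlow : x (k+1) ≤ w := by
      rw [hxj, div_le_iff₀ hR0]; linarith
    have hwhigh : w ≤ x (k+2) := by
      rw [hxj1, le_div_iff₀ hR0]; linarith
    have hgap : x (k+2) = x (k+1) + 2 * b := by
      rw [hxj, hxj1]
      field_simp
      nlinarith [h2br]
    have g1 := hintg (k+1) hj (w - b) (x (k+1) + b)
      (by linarith) (by linarith) (by linarith)
    have g2 := hintg (k+2) hj1 (x (k+1) + b) (w + b)
      (by linarith) (by linarith) (by linarith)
    have i1 := hint (k+1) hj (w - b) (x (k+1) + b)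
      (by linarith) (by linarith) (by linarith)
    have i2 := hint (k+2) hj1 (x (k+1) + b) (w + b)
      (by linarith) (by linarith) (by linarith)
    have hsplit : (∫ y in (w-b)..(w+b), Real.log (2*b*outDen (r:ℝ) b μ y))
        = (x (k+1) + b - (w - b)) * Real.log (m (k+1))
          + (w + b - (x (k+1) + b)) * Real.log (m (k+2)) := by
      rw [← intervalIntegral.integral_add_adjacent_intervals g1 g2, i1, i2]
    have hθ0 : 0 ≤ (r:ℝ) * (w - x (k+1)) :=
      mul_nonneg hR0.le (by linarith)
    have hθ1 : (r:ℝ) * (w - x (k+1)) ≤ 1 := by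
      have h1 : w - x (k+1) ≤ 2*b := by linarith
      have h2 : (r:ℝ) * (w - x (k+1)) ≤ (r:ℝ) * (2*b) :=
        mul_le_mul_of_nonneg_left h1 hR0.le
      linarith [h2br]
    have hpt : (1 - (r:ℝ)*(w - x (k+1))) • x (k+1) + ((r:ℝ)*(w - x (k+1))) • x (k+2) = w := by
      rw [smul_eq_mul, smul_eq_mul, hgap]
      linear_combination (w - x (k+1)) * h2br
    have hconc0 := hc_conc.2 (hxmem (k+1) hj) (hxmem (k+2) hj1)
      (by linarith : (0:ℝ) ≤ 1 - (r:ℝ)*(w - x (k+1))) hθ0 (by ring)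
    rw [hpt, smul_eq_mul, smul_eq_mul] at hconc0
    have hM : margInfo (r:ℝ) b μ w
        = Real.log z + lam * ((1 - (r:ℝ)*(w - x (k+1))) * c (x (k+1))
            + ((r:ℝ)*(w - x (k+1))) * c (x (k+2))) := by
      rw [margInfo, hsplit, hlogm, hlogm]
      linear_combination (Real.log z + lam * c (x (k+1))) * h2br
    rw [hM, hI']
    have hcc := mul_le_mul_of_nonneg_left hconc0 hlam
    linarith
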